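/- arXiv:2512.23263 — 2 statements merged into one kernel-verified Lean document; each statement's English description precedes it below -/
import Mathlib

section
/- Let b̃ ∈ R^n satisfy the Diophantine condition |b̃·j| ≥ c/|j|^r (r > n−1, c > 0) and let (V,H) solve the linear system ∂_t V + V = b̃·∇H, ∂_t H = b̃·∇V on T^n with divergence-free, mean-zero initial data (V₀,H₀) ∈ H^m, m ≥ 1. Then for 0 ≤ s ≤ m−1, ‖V(t)‖_{H^s} ≤ C(1+t)^{−1/2−(m−s)/(2r)} ‖(V₀,H₀)‖_{H^m}, and for 0 ≤ s ≤ m, ‖H(t)‖_{H^s} ≤ C(1+t)^{−(m−s)/(2r)} ‖(V₀,H₀)‖_{H^m}. -/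
/-!
On the Fourier side each frequency `j` decouples into the damped system
`V' = -V + iξH`, `H' = iξV` with `ξ = b̃·j`. Only `V` is damped, but the Lyapunov functional
`‖V‖² + ‖H‖² - ε Re⟪V, iξH⟫` with `ε = 1/(2(1+ξ²))` transfers the damping to `H`, so the
energy decays like `exp(-ρt/5)` with `ρ = ξ²/(1+ξ²)`. For small `ξ` the forcing `iξH` of the
damped equation for `V` is of size `ρ`, so `‖V‖²` carries an extra factor `ρ`, i.e. one more
power of `(1+t)^(-1)`. The Diophantine condition gives `ρ⁻¹ ≲ (1+|j|²)^r`, hence trading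
`exp(-ρt)` for `(1+t)^(-γ)` costs the weight `(1+|j|²)^(rγ)`, that is `rγ = m - s` derivatives;
summing over `j` gives the Sobolev estimates.
-/

open Real
open scoped InnerProductSpace

/-- Euclidean norm of a lattice frequency `j ∈ ℤⁿ`. -/
noncomputable def jnorm (n : ℕ) (j : Fin n → ℤ) : ℝ :=
  Real.sqrt (∑ i, ((j i : ℝ)) ^ 2)

lemma le_exp_neg_mul_mul_of_hasDerivAt {u u' : ℝ → ℝ} {κ : ℝ}
    (hu : ∀ t, HasDerivAt u (u' t) t) (hbound : ∀ t, 0 ≤ t → u' t ≤ -κ * u t)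
    {t : ℝ} (ht : 0 ≤ t) : u t ≤ exp (-κ * t) * u 0 := by
  have hderiv : ∀ τ, HasDerivAt (fun τ => exp (κ * τ) * u τ)
      (exp (κ * τ) * (κ * u τ + u' τ)) τ := fun τ => by
    have hexp : HasDerivAt (fun τ => exp (κ * τ)) (exp (κ * τ) * κ) τ := by
      simpa using ((hasDerivAt_id τ).const_mul κ).exp
    exact (hexp.mul (hu τ)).congr_deriv (by ring)
  have hanti : AntitoneOn (fun τ => exp (κ * τ) * u τ) (Set.Ici 0) := by
    refine antitoneOn_of_hasDerivWithinAt_nonpos (convex_Ici 0)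
      (fun τ _ => (hderiv τ).continuousAt.continuousWithinAt)
      (fun τ _ => (hderiv τ).hasDerivWithinAt) fun τ hτ => ?_
    rw [interior_Ici] at hτ
    exact mul_nonpos_of_nonneg_of_nonpos (exp_nonneg _) (by linarith [hbound τ hτ.le])
  have h := hanti Set.self_mem_Ici ht ht
  simp only [mul_zero, exp_zero, one_mul] at h
  calc u t = exp (-κ * t) * (exp (κ * t) * u t) := by
        rw [← mul_assoc, ← exp_add]; simp
    _ ≤ exp (-κ * t) * u 0 := by gcongr

lemma le_exp_neg_mul_mul_add_of_hasDerivAt {u u' : ℝ → ℝ} {κ a K : ℝ}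
    (hu : ∀ t, HasDerivAt u (u' t) t) (hK : 0 ≤ K) (ha : a < κ)
    (hbound : ∀ t, 0 ≤ t → u' t ≤ -κ * u t + K * exp (-a * t)) {t : ℝ} (ht : 0 ≤ t) :
    u t ≤ exp (-κ * t) * u 0 + K / (κ - a) * exp (-a * t) := by
  have hκa : 0 < κ - a := sub_pos.mpr ha
  -- subtracting the particular solution `K/(κ-a) e^{-at}` leaves the homogeneous inequality
  set v := fun τ => u τ - K / (κ - a) * exp (-a * τ)
  have hv : ∀ τ, HasDerivAt v (u' τ + a * (K / (κ - a)) * exp (-a * τ)) τ := fun τ => by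
    have hexp : HasDerivAt (fun τ => exp (-a * τ)) (exp (-a * τ) * -a) τ := by
      simpa using ((hasDerivAt_id τ).const_mul (-a)).exp
    exact ((hu τ).sub (hexp.const_mul (K / (κ - a)))).congr_deriv (by ring)
  have hvt := le_exp_neg_mul_mul_of_hasDerivAt (κ := κ) hv (fun τ hτ => by
    have := hbound τ hτ
    have e : a * (K / (κ - a)) + K = κ * (K / (κ - a)) := by field_simp; ring
    simp only [v]
    nlinarith [exp_pos (-a * τ)]) ht
  have hv0 : v 0 ≤ u 0 := by simp only [v]; nlinarith [div_nonneg hK hκa.le, exp_pos (-a * 0)]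
  simp only [v] at hvt
  nlinarith [exp_pos (-κ * t)]

section InnerProduct

variable {E : Type*} [NormedAddCommGroup E] [InnerProductSpace ℂ E]

lemma re_inner_self_eq_norm_sq (x : E) : (⟪x, x⟫_ℂ).re = ‖x‖ ^ 2 :=
  inner_self_eq_norm_sq (𝕜 := ℂ) x

lemma HasDerivAt.norm_sq_complex {f : ℝ → E} {f' : E} {t : ℝ} (hf : HasDerivAt f f' t) :
    HasDerivAt (‖f ·‖ ^ 2) (2 * (⟪f t, f'⟫_ℂ).re) t := by
  have h := Complex.reCLM.hasFDerivAt.comp_hasDerivAt t (hf.inner ℂ hf)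
  simp only [Function.comp_def, Complex.reCLM_apply, Complex.add_re,
    inner_self_eq_norm_sq_to_K] at h
  rw [← inner_conj_symm f' (f t), Complex.conj_re, ← two_mul] at h
  exact h.congr_of_eventuallyEq (.of_forall fun τ => by norm_cast)

lemma HasDerivAt.re_inner {f g : ℝ → E} {f' g' : E} {t : ℝ} (hf : HasDerivAt f f' t)
    (hg : HasDerivAt g g' t) :
    HasDerivAt (fun τ => (⟪f τ, g τ⟫_ℂ).re) ((⟪f t, g'⟫_ℂ).re + (⟪f', g t⟫_ℂ).re) t := by
  simpa [Function.comp_def] using Complex.reCLM.hasFDerivAt.comp_hasDerivAt t (hf.inner ℂ hg)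

lemma re_inner_I_mul_smul_add_re_inner_I_mul_smul (ξ : ℝ) (x y : E) :
    (⟪x, (Complex.I * ξ) • y⟫_ℂ).re + (⟪y, (Complex.I * ξ) • x⟫_ℂ).re = 0 := by
  simp only [inner_smul_right, Complex.mul_re, Complex.I_re, Complex.I_im, Complex.ofReal_re,
    Complex.ofReal_im]
  rw [← inner_conj_symm x y, Complex.conj_im, Complex.conj_re]
  ring

lemma re_inner_I_mul_smul_I_mul_smul_self (ξ : ℝ) (x : E) :
    (⟪x, (Complex.I * ξ) • (Complex.I * ξ) • x⟫_ℂ).re = -ξ ^ 2 * ‖x‖ ^ 2 := by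
  simp [Complex.mul_re, inner_self_eq_norm_sq_to_K, ← Complex.ofReal_pow]
  ring

lemma re_inner_I_mul_smul_self (ξ : ℝ) (x : E) :
    (⟪(Complex.I * ξ) • x, (Complex.I * ξ) • x⟫_ℂ).re = ξ ^ 2 * ‖x‖ ^ 2 := by
  rw [re_inner_self_eq_norm_sq, norm_smul]
  simp [mul_pow]

lemma abs_re_inner_I_mul_smul_le (ξ : ℝ) (x y : E) :
    |(⟪x, (Complex.I * ξ) • y⟫_ℂ).re| ≤ |ξ| * (‖x‖ * ‖y‖) :=
  calc |(⟪x, (Complex.I * ξ) • y⟫_ℂ).re| ≤ ‖x‖ * ‖(Complex.I * ξ) • y‖ :=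
        (Complex.abs_re_le_norm _).trans (norm_inner_le_norm _ _)
    _ = |ξ| * (‖x‖ * ‖y‖) := by simp [norm_smul]; ring

end InnerProduct

lemma rpow_mul_exp_neg_le {x γ : ℝ} {k : ℕ} (hx : 0 ≤ x) (hγ0 : 0 ≤ γ) (hγk : γ ≤ k) :
    x ^ γ * exp (-x) ≤ 1 + k.factorial := by
  have hpow : x ^ γ ≤ 1 + x ^ k := by
    rcases le_total x 1 with hx1 | hx1
    · linarith [rpow_le_one hx hx1 hγ0, pow_nonneg hx k]
    · linarith [rpow_natCast x k ▸ rpow_le_rpow_of_exponent_le hx1 hγk]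
  have hfac : x ^ k * exp (-x) ≤ k.factorial := by
    rw [exp_neg, ← div_eq_mul_inv, div_le_iff₀ (exp_pos x), mul_comm]
    exact (div_le_iff₀ (by positivity)).mp (pow_div_factorial_le_exp x hx k)
  calc x ^ γ * exp (-x) ≤ (1 + x ^ k) * exp (-x) := by gcongr
    _ = exp (-x) + x ^ k * exp (-x) := by ring
    _ ≤ 1 + k.factorial := by gcongr; exact exp_le_one_iff.mpr (by linarith)

lemma exp_neg_mul_le {a t γ : ℝ} {k : ℕ} (ha0 : 0 < a) (ha1 : a ≤ 1) (ht : 0 ≤ t)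
    (hγ0 : 0 ≤ γ) (hγk : γ ≤ k) :
    exp (-a * t) ≤ exp 1 * (1 + k.factorial) * a ^ (-γ) * (1 + t) ^ (-γ) := by
  set x := a * (1 + t)
  have hx : 0 < x := by positivity
  have hsplit : exp (-a * t) = exp a * exp (-x) := by rw [← exp_add]; congr 1; ring
  have hxγ : x ^ (-γ) = a ^ (-γ) * (1 + t) ^ (-γ) := mul_rpow ha0.le (by linarith)
  have hdecay : exp (-x) ≤ (1 + k.factorial) * x ^ (-γ) := by
    rw [rpow_neg hx.le, ← div_eq_mul_inv, le_div_iff₀ (by positivity), mul_comm]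
    exact rpow_mul_exp_neg_le hx.le hγ0 hγk
  calc exp (-a * t) = exp a * exp (-x) := hsplit
    _ ≤ exp 1 * ((1 + k.factorial) * x ^ (-γ)) := by
        gcongr
    _ = exp 1 * (1 + k.factorial) * a ^ (-γ) * (1 + t) ^ (-γ) := by rw [hxγ]; ring

lemma rpow_neg_le_of_inv_le {a M w r γ : ℝ} {k : ℕ} (ha : 0 < a) (hM : 1 ≤ M) (hw : 0 ≤ w)
    (haw : a⁻¹ ≤ M * w ^ r) (hγ0 : 0 ≤ γ) (hγk : γ ≤ k) :
    a ^ (-γ) ≤ M ^ k * w ^ (r * γ) :=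
  calc a ^ (-γ) = a⁻¹ ^ γ := by rw [rpow_neg ha.le, inv_rpow ha.le]
    _ ≤ (M * w ^ r) ^ γ := by gcongr
    _ = M ^ γ * w ^ (r * γ) := by rw [mul_rpow (by positivity) (by positivity), rpow_mul hw]
    _ ≤ M ^ k * w ^ (r * γ) := by
        gcongr
        exact rpow_natCast M k ▸ rpow_le_rpow_of_exponent_le hM hγk

noncomputable def decayRate (ξ : ℝ) : ℝ := ξ ^ 2 / (1 + ξ ^ 2)

lemma decayRate_nonneg (ξ : ℝ) : 0 ≤ decayRate ξ := by unfold decayRate; positivity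

lemma decayRate_le_one (ξ : ℝ) : decayRate ξ ≤ 1 := by
  unfold decayRate; rw [div_le_one (by positivity)]; linarith

lemma decayRate_pos {ξ : ℝ} (hξ : ξ ≠ 0) : 0 < decayRate ξ := by unfold decayRate; positivity

/-- The Fourier mode of frequency `j` of the linearized system, with `ξ = b̃·j`. -/
structure IsModeSolution {E : Type*} [NormedAddCommGroup E] [InnerProductSpace ℂ E]
    (ξ : ℝ) (V H : ℝ → E) : Prop where
  hasDerivAt_velocity : ∀ t, HasDerivAt V (-V t + (Complex.I * ξ) • H t) t
  hasDerivAt_magnetic : ∀ t, HasDerivAt H ((Complex.I * ξ) • V t) t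

/-- `2C(1 + 25B)` with `C = e(1 + k!)` from `exp_neg_mul_le` and `B = (5A)^k` from
`rpow_neg_le_of_inv_le`, where `ρ⁻¹ ≤ A w^r`. -/
noncomputable def modeConstant (A : ℝ) (k : ℕ) : ℝ :=
  2 * (exp 1 * (1 + k.factorial)) * (1 + 25 * (5 * A) ^ k)

namespace IsModeSolution

variable {E : Type*} [NormedAddCommGroup E] [InnerProductSpace ℂ E] {ξ : ℝ} {V H : ℝ → E}

lemma hasDerivAt_norm_sq_velocity (hs : IsModeSolution ξ V H) (t : ℝ) :
    HasDerivAt (‖V ·‖ ^ 2) (-2 * ‖V t‖ ^ 2 + 2 * (⟪V t, (Complex.I * ξ) • H t⟫_ℂ).re) t := by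
  refine (hs.hasDerivAt_velocity t).norm_sq_complex.congr_deriv ?_
  simp only [inner_add_right, inner_neg_right, Complex.add_re, Complex.neg_re,
    re_inner_self_eq_norm_sq]
  ring

lemma hasDerivAt_energy (hs : IsModeSolution ξ V H) (t : ℝ) :
    HasDerivAt (fun τ => ‖V τ‖ ^ 2 + ‖H τ‖ ^ 2) (-2 * ‖V t‖ ^ 2) t := by
  refine (hs.hasDerivAt_norm_sq_velocity t).add
    (hs.hasDerivAt_magnetic t).norm_sq_complex |>.congr_deriv ?_
  linear_combination 2 * re_inner_I_mul_smul_add_re_inner_I_mul_smul ξ (V t) (H t)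

lemma hasDerivAt_cross (hs : IsModeSolution ξ V H) (t : ℝ) :
    HasDerivAt (fun τ => (⟪V τ, (Complex.I * ξ) • H τ⟫_ℂ).re)
      (ξ ^ 2 * ‖H t‖ ^ 2 - ξ ^ 2 * ‖V t‖ ^ 2 - (⟪V t, (Complex.I * ξ) • H t⟫_ℂ).re) t := by
  refine (hs.hasDerivAt_velocity t).re_inner
    ((hs.hasDerivAt_magnetic t).const_smul (Complex.I * ξ)) |>.congr_deriv ?_
  rw [Pi.smul_apply, re_inner_I_mul_smul_I_mul_smul_self, inner_add_left, inner_neg_left,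
    Complex.add_re, Complex.neg_re, re_inner_I_mul_smul_self]
  ring

lemma energy_le (hs : IsModeSolution ξ V H) {t : ℝ} (ht : 0 ≤ t) :
    ‖V t‖ ^ 2 + ‖H t‖ ^ 2 ≤ 2 * exp (-(decayRate ξ / 5) * t) * (‖V 0‖ ^ 2 + ‖H 0‖ ^ 2) := by
  set ρ := decayRate ξ
  set ε := 1 / (2 * (1 + ξ ^ 2))
  set g := fun τ => (⟪V τ, (Complex.I * ξ) • H τ⟫_ℂ).re
  set L := fun τ => ‖V τ‖ ^ 2 + ‖H τ‖ ^ 2 - ε * g τ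
  have hε : 0 < ε := by positivity
  have hεξ : ε * |ξ| ≤ 1 / 4 := by
    rw [div_mul_eq_mul_div, div_le_div_iff₀ (by positivity) (by norm_num)]
    nlinarith [sq_nonneg (|ξ| - 1), sq_abs ξ]
  have hεξ2 : ε * ξ ^ 2 = ρ / 2 := by simp only [ε, ρ, decayRate]; field_simp
  have hρ1 : ρ ≤ 1 := decayRate_le_one ξ
  have hρ0 : 0 ≤ ρ := decayRate_nonneg ξ
  have hcross : ∀ τ, |ε * g τ| ≤ ε * |ξ| * (‖V τ‖ * ‖H τ‖) := fun τ => by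
    rw [abs_mul, abs_of_pos hε, mul_assoc]
    exact mul_le_mul_of_nonneg_left (abs_re_inner_I_mul_smul_le ξ _ _) hε.le
  have hamgm : ∀ τ, 2 * (‖V τ‖ * ‖H τ‖) ≤ ‖V τ‖ ^ 2 + ‖H τ‖ ^ 2 := fun τ => by
    nlinarith [sq_nonneg (‖V τ‖ - ‖H τ‖)]
  have hLE : ∀ τ, |L τ - (‖V τ‖ ^ 2 + ‖H τ‖ ^ 2)| ≤ (‖V τ‖ ^ 2 + ‖H τ‖ ^ 2) / 8 := by
    intro τ
    simp only [L, sub_sub_cancel_left, abs_neg]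
    nlinarith [hcross τ, hamgm τ, mul_nonneg (norm_nonneg (V τ)) (norm_nonneg (H τ))]
  have hL' : ∀ τ,
      HasDerivAt L (-2 * ‖V τ‖ ^ 2 + ρ / 2 * (‖V τ‖ ^ 2 - ‖H τ‖ ^ 2) + ε * g τ) τ := fun τ =>
    ((hs.hasDerivAt_energy τ).sub ((hs.hasDerivAt_cross τ).const_mul ε)).congr_deriv
      (by rw [← hεξ2]; ring)
  -- `L' ≤ -‖V‖² - ρ/4 ‖H‖² ≤ -ρ/4 (‖V‖² + ‖H‖²) ≤ -ρ/5 L`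
  have hdecay := le_exp_neg_mul_mul_of_hasDerivAt (κ := ρ / 5) hL' (fun τ _ => by
    have hg : ε * g τ ≤ ε / 2 * ‖V τ‖ ^ 2 + ρ / 4 * ‖H τ‖ ^ 2 := by
      have hsq := mul_nonneg hε.le (sq_nonneg (‖V τ‖ - |ξ| * ‖H τ‖))
      have hξ2 : ε * |ξ| ^ 2 = ρ / 2 := by rw [sq_abs, hεξ2]
      nlinarith [le_abs_self (ε * g τ), hcross τ]
    have hε2 : ε ≤ 1 / 2 := by
      rw [div_le_div_iff₀ (by positivity) (by norm_num)]; nlinarith [sq_nonneg ξ]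
    nlinarith [(abs_le.mp (hLE τ)).2, mul_le_mul_of_nonneg_left (abs_le.mp (hLE τ)).2 hρ0,
      mul_le_mul_of_nonneg_right hρ1 (sq_nonneg ‖V τ‖),
      mul_le_mul_of_nonneg_right hε2 (sq_nonneg ‖V τ‖), mul_nonneg hρ0 (sq_nonneg ‖H τ‖)]) ht
  have hexp := exp_pos (-(ρ / 5) * t)
  nlinarith [hLE t, hLE 0, abs_le.mp (hLE t), abs_le.mp (hLE 0),
    mul_le_mul_of_nonneg_left (abs_le.mp (hLE 0)).2 hexp.le,
    mul_nonneg hexp.le (add_nonneg (sq_nonneg ‖V 0‖) (sq_nonneg ‖H 0‖))]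

lemma norm_sq_velocity_le (hs : IsModeSolution ξ V H) {t : ℝ} (ht : 0 ≤ t) :
    ‖V t‖ ^ 2 ≤ (exp (-t) + 5 * decayRate ξ * exp (-(decayRate ξ / 5) * t)) *
      (‖V 0‖ ^ 2 + ‖H 0‖ ^ 2) := by
  set ρ := decayRate ξ
  set E₀ := ‖V 0‖ ^ 2 + ‖H 0‖ ^ 2
  have hE₀ : 0 ≤ E₀ := by positivity
  have hρ1 : ρ ≤ 1 := decayRate_le_one ξ
  have hρ0 : 0 ≤ ρ := decayRate_nonneg ξ
  have hexp := exp_pos (-(ρ / 5) * t)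
  rcases le_or_gt (ξ ^ 2) 1 with hξ | hξ
  · have hξρ : ξ ^ 2 ≤ 2 * ρ := by
      simp only [ρ, decayRate]
      rw [mul_div_assoc', le_div_iff₀ (by positivity)]
      nlinarith [sq_nonneg ξ]
    have hu := le_exp_neg_mul_mul_add_of_hasDerivAt (κ := 1) (a := ρ / 5) (K := 4 * ρ * E₀)
      hs.hasDerivAt_norm_sq_velocity (by positivity) (by linarith) (fun τ hτ => by
        have hsq := sq_nonneg (‖V τ‖ - |ξ| * ‖H τ‖)
        have hcross := le_abs_self (⟪V τ, (Complex.I * ξ) • H τ⟫_ℂ).re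
        have hH : ‖H τ‖ ^ 2 ≤ 2 * exp (-(ρ / 5) * τ) * E₀ := by
          nlinarith [hs.energy_le hτ, sq_nonneg ‖V τ‖]
        nlinarith [abs_re_inner_I_mul_smul_le ξ (V τ) (H τ), sq_abs ξ,
          mul_le_mul hξρ hH (sq_nonneg _) (by positivity)]) ht
    have hK : 4 * ρ * E₀ / (1 - ρ / 5) ≤ 5 * ρ * E₀ := by
      rw [div_le_iff₀ (by linarith)]
      nlinarith [mul_nonneg hρ0 hE₀]
    rw [neg_one_mul] at hu
    nlinarith [mul_le_mul_of_nonneg_right hK hexp.le, exp_pos (-t),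
      mul_le_mul_of_nonneg_left (show ‖V 0‖ ^ 2 ≤ E₀ by nlinarith [sq_nonneg ‖H 0‖])
        (exp_pos (-t)).le]
  · -- for `ξ² > 1` the energy bound suffices, as then `ρ ≥ 1/2`
    have hρ : 1 / 2 ≤ ρ := by
      simp only [ρ, decayRate]
      rw [le_div_iff₀ (by positivity)]
      linarith
    nlinarith [hs.energy_le ht, sq_nonneg ‖H t‖, mul_nonneg (exp_pos (-t)).le hE₀,
      mul_le_mul_of_nonneg_right hρ (mul_nonneg hexp.le hE₀)]

lemma norm_sq_velocity_le_modeConstant (hs : IsModeSolution ξ V H) {A w r γ t : ℝ} {k : ℕ}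
    (hξ : ξ ≠ 0) (hρ : (decayRate ξ)⁻¹ ≤ A * w ^ r) (hA : 1 ≤ A) (hw : 1 ≤ w) (hr : 0 ≤ r)
    (hγ0 : 0 ≤ γ) (hγk : 1 + γ ≤ k) (ht : 0 ≤ t) :
    ‖V t‖ ^ 2 ≤
      modeConstant A k * (1 + t) ^ (-(1 + γ)) * (w ^ (r * γ) * (‖V 0‖ ^ 2 + ‖H 0‖ ^ 2)) := by
  set a := decayRate ξ / 5
  set C := exp 1 * (1 + (k.factorial : ℝ))
  set B := (5 * A) ^ k
  set W := w ^ (r * γ)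
  have ha0 : 0 < a := by have := decayRate_pos hξ; positivity
  have ha1 : a ≤ 1 := by have := decayRate_le_one ξ; simp only [a]; linarith
  have hB : 1 ≤ B := one_le_pow₀ (by linarith)
  have hW : 1 ≤ W := one_le_rpow hw (by positivity)
  have haγ : a ^ (-γ) ≤ B * W := rpow_neg_le_of_inv_le ha0 (by linarith) (by linarith)
    (by rw [inv_div, div_eq_mul_inv, mul_comm]; linarith) hγ0 (by linarith)
  have hdamped : exp (-t) ≤ C * (1 + t) ^ (-(1 + γ)) := by
    simpa using exp_neg_mul_le (a := 1) one_pos le_rfl ht (by linarith) hγk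
  have hforced : a * exp (-a * t) ≤ C * (B * W) * (1 + t) ^ (-(1 + γ)) :=
    calc a * exp (-a * t) ≤ a * (C * a ^ (-(1 + γ)) * (1 + t) ^ (-(1 + γ))) := by
          gcongr; exact exp_neg_mul_le ha0 ha1 ht (by linarith) hγk
      _ = C * a ^ (-γ) * (1 + t) ^ (-(1 + γ)) := by
          rw [rpow_neg ha0.le, rpow_neg ha0.le, rpow_add ha0, rpow_one]; field_simp
      _ ≤ C * (B * W) * (1 + t) ^ (-(1 + γ)) := by gcongr
  calc ‖V t‖ ^ 2 ≤ (exp (-t) + 25 * (a * exp (-a * t))) * (‖V 0‖ ^ 2 + ‖H 0‖ ^ 2) := by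
        convert hs.norm_sq_velocity_le ht using 3; ring
    _ ≤ (C * (1 + t) ^ (-(1 + γ)) * W + 25 * (C * (B * W) * (1 + t) ^ (-(1 + γ)))) *
          (‖V 0‖ ^ 2 + ‖H 0‖ ^ 2) := by
        gcongr
        exact hdamped.trans (le_mul_of_one_le_right (by positivity) hW)
    _ = C * (1 + 25 * B) * (1 + t) ^ (-(1 + γ)) * (W * (‖V 0‖ ^ 2 + ‖H 0‖ ^ 2)) := by ring
    _ ≤ modeConstant A k * (1 + t) ^ (-(1 + γ)) * (W * (‖V 0‖ ^ 2 + ‖H 0‖ ^ 2)) := by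
        have hK : C * (1 + 25 * B) ≤ modeConstant A k := by
          show C * (1 + 25 * B) ≤ 2 * C * (1 + 25 * B)
          have : 0 < C * (1 + 25 * B) := by positivity
          linarith
        gcongr

lemma norm_sq_magnetic_le_modeConstant (hs : IsModeSolution ξ V H) {A w r γ t : ℝ} {k : ℕ}
    (hξ : ξ ≠ 0) (hρ : (decayRate ξ)⁻¹ ≤ A * w ^ r) (hA : 1 ≤ A) (hw : 0 ≤ w)
    (hγ0 : 0 ≤ γ) (hγk : γ ≤ k) (ht : 0 ≤ t) :
    ‖H t‖ ^ 2 ≤ modeConstant A k * (1 + t) ^ (-γ) * (w ^ (r * γ) * (‖V 0‖ ^ 2 + ‖H 0‖ ^ 2)) := by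
  set a := decayRate ξ / 5
  set C := exp 1 * (1 + (k.factorial : ℝ))
  set B := (5 * A) ^ k
  have ha0 : 0 < a := by have := decayRate_pos hξ; positivity
  have ha1 : a ≤ 1 := by have := decayRate_le_one ξ; simp only [a]; linarith
  have haγ : a ^ (-γ) ≤ B * w ^ (r * γ) := rpow_neg_le_of_inv_le ha0 (by linarith) hw
    (by rw [inv_div, div_eq_mul_inv, mul_comm]; linarith) hγ0 hγk
  calc ‖H t‖ ^ 2 ≤ 2 * exp (-a * t) * (‖V 0‖ ^ 2 + ‖H 0‖ ^ 2) := by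
        nlinarith [hs.energy_le ht, sq_nonneg ‖V t‖]
    _ ≤ 2 * (C * a ^ (-γ) * (1 + t) ^ (-γ)) * (‖V 0‖ ^ 2 + ‖H 0‖ ^ 2) := by
        gcongr; exact exp_neg_mul_le ha0 ha1 ht hγ0 hγk
    _ ≤ 2 * (C * (B * w ^ (r * γ)) * (1 + t) ^ (-γ)) * (‖V 0‖ ^ 2 + ‖H 0‖ ^ 2) := by gcongr
    _ = 2 * C * B * (1 + t) ^ (-γ) * (w ^ (r * γ) * (‖V 0‖ ^ 2 + ‖H 0‖ ^ 2)) := by ring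
    _ ≤ modeConstant A k * (1 + t) ^ (-γ) * (w ^ (r * γ) * (‖V 0‖ ^ 2 + ‖H 0‖ ^ 2)) := by
        have hK : 2 * C * B ≤ modeConstant A k := by
          show 2 * C * B ≤ 2 * C * (1 + 25 * B)
          have : 0 < C := by positivity
          nlinarith [pow_nonneg (show (0:ℝ) ≤ 5 * A by linarith) k]
        gcongr

lemma eq_zero_of_initial_eq_zero (hs : IsModeSolution ξ V H) (hV0 : V 0 = 0) (hH0 : H 0 = 0)
    {t : ℝ} (ht : 0 ≤ t) : V t = 0 ∧ H t = 0 := by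
  have h := hs.energy_le ht
  rw [hV0, hH0, norm_zero, zero_pow two_ne_zero, add_zero, mul_zero] at h
  constructor <;> rw [← norm_eq_zero] <;> nlinarith [sq_nonneg ‖V t‖, sq_nonneg ‖H t‖]

end IsModeSolution

lemma decayRate_inv_le {c r x ξ : ℝ} (hc : 0 < c) (hr : 0 ≤ r) (hx : 0 < x)
    (hξ : c / x ^ r ≤ |ξ|) : (decayRate ξ)⁻¹ ≤ (1 + c⁻¹ ^ 2) * (1 + x ^ 2) ^ r := by
  have hcx : 0 < c / x ^ r := by positivity
  have hξ0 : 0 < ξ ^ 2 := by rw [← sq_abs]; exact pow_pos (hcx.trans_le hξ) 2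
  have hinv : (ξ ^ 2)⁻¹ ≤ c⁻¹ ^ 2 * (x ^ 2) ^ r := by
    rw [← rpow_natCast x 2, ← rpow_mul hx.le, mul_comm _ r, rpow_mul hx.le, rpow_natCast,
      ← inv_pow, ← mul_pow, ← sq_abs, abs_inv]
    gcongr
    calc |ξ|⁻¹ ≤ (c / x ^ r)⁻¹ := inv_anti₀ hcx hξ
      _ = c⁻¹ * x ^ r := by rw [inv_div, div_eq_inv_mul]
  have hw : (x ^ 2) ^ r ≤ (1 + x ^ 2) ^ r := by gcongr; linarith
  have hw1 : 1 ≤ (1 + x ^ 2) ^ r := one_le_rpow (by nlinarith) hr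
  calc (decayRate ξ)⁻¹ = 1 + (ξ ^ 2)⁻¹ := by
        rw [decayRate, inv_div, add_div, div_self hξ0.ne', one_div, add_comm]
    _ ≤ (1 + x ^ 2) ^ r + c⁻¹ ^ 2 * (1 + x ^ 2) ^ r := by gcongr; exact hinv.trans (by gcongr)
    _ = (1 + c⁻¹ ^ 2) * (1 + x ^ 2) ^ r := by ring

lemma sqrt_tsum_le_of_le_mul {ι : Type*} {f g : ι → ℝ} {A : ℝ} (hA : 0 ≤ A)
    (hf : ∀ i, 0 ≤ f i) (hfg : ∀ i, f i ≤ A * g i) (hg : Summable g) :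
    √(∑' i, f i) ≤ √A * √(∑' i, g i) := by
  rw [← sqrt_mul hA, ← tsum_mul_left]
  exact sqrt_le_sqrt (Summable.tsum_le_tsum hfg (.of_nonneg_of_le hf hfg (hg.mul_left A))
    (hg.mul_left A))

lemma sqrt_mul_rpow {a x : ℝ} (ha : 0 ≤ a) (hx : 0 ≤ x) (e : ℝ) :
    √(a * x ^ e) = √a * x ^ (e / 2) := by
  rw [sqrt_mul ha, sqrt_eq_rpow (x ^ e), ← rpow_mul hx]; ring_nf

lemma jnorm_pos {n : ℕ} {j : Fin n → ℤ} (hj : j ≠ 0) : 0 < jnorm n j := by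
  obtain ⟨i, hi⟩ := Function.ne_iff.mp hj
  have hi' : (j i : ℝ) ≠ 0 := by exact_mod_cast hi
  exact sqrt_pos.mpr <| (pow_pos (abs_pos.mpr hi') 2).trans_le <| (sq_abs _).le.trans <|
    Finset.single_le_sum (fun i _ => sq_nonneg (j i : ℝ)) (Finset.mem_univ i)

lemma weighted_norm_sq_le {n : ℕ} {bt : Fin n → ℝ} {c r : ℝ} (hc : 0 < c)
    (hr : (n : ℝ) - 1 < r)
    (hdio : ∀ j : Fin n → ℤ, j ≠ 0 → c / jnorm n j ^ r ≤ |∑ i, bt i * (j i : ℝ)|)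
    {E : Type*} [NormedAddCommGroup E] [InnerProductSpace ℂ E] {V H : ℝ → (Fin n → ℤ) → E}
    (hsol : ∀ j, IsModeSolution (∑ i, bt i * (j i : ℝ)) (V · j) (H · j))
    (hV0 : V 0 0 = 0) (hH0 : H 0 0 = 0) {m s t : ℝ} (hs : 0 ≤ s) (hsm : s ≤ m) (ht : 0 ≤ t)
    (j : Fin n → ℤ) :
    (1 + jnorm n j ^ 2) ^ s * ‖V t j‖ ^ 2 ≤
        modeConstant (1 + c⁻¹ ^ 2) (⌈m / r⌉₊ + 1) * (1 + t) ^ (-(1 + (m - s) / r)) *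
          ((1 + jnorm n j ^ 2) ^ m * (‖V 0 j‖ ^ 2 + ‖H 0 j‖ ^ 2)) ∧
    (1 + jnorm n j ^ 2) ^ s * ‖H t j‖ ^ 2 ≤
        modeConstant (1 + c⁻¹ ^ 2) (⌈m / r⌉₊ + 1) * (1 + t) ^ (-((m - s) / r)) *
          ((1 + jnorm n j ^ 2) ^ m * (‖V 0 j‖ ^ 2 + ‖H 0 j‖ ^ 2)) := by
  rcases eq_or_ne j 0 with rfl | hj
  · obtain ⟨hVt, hHt⟩ := (hsol 0).eq_zero_of_initial_eq_zero hV0 hH0 ht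
    simp [hVt, hHt, hV0, hH0]
  have hr0 : 0 < r := by
    obtain ⟨i, -⟩ := Function.ne_iff.mp hj
    have : (1 : ℝ) ≤ n := by exact_mod_cast i.pos
    linarith
  set w := 1 + jnorm n j ^ 2
  have hw : 1 ≤ w := le_add_of_nonneg_right (sq_nonneg _)
  have hd := hdio j hj
  have hξ : ∑ i, bt i * (j i : ℝ) ≠ 0 := by
    intro h
    rw [h, abs_zero] at hd
    exact (div_pos hc (rpow_pos_of_pos (jnorm_pos hj) r)).not_ge hd
  have hγk : 1 + (m - s) / r ≤ ((⌈m / r⌉₊ + 1 : ℕ) : ℝ) := by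
    push_cast
    linarith [Nat.le_ceil (m / r), div_le_div_of_nonneg_right (by linarith : m - s ≤ m) hr0.le]
  have hwm : w ^ s * w ^ (r * ((m - s) / r)) = w ^ m := by
    rw [← rpow_add (by linarith), mul_div_cancel₀ _ hr0.ne']; ring_nf
  have hρ := decayRate_inv_le hc hr0.le (jnorm_pos hj) hd
  have hA : 1 ≤ 1 + c⁻¹ ^ 2 := le_add_of_nonneg_right (sq_nonneg _)
  have hγ0 : 0 ≤ (m - s) / r := div_nonneg (by linarith) hr0.le
  have hVt := (hsol j).norm_sq_velocity_le_modeConstant hξ hρ hA hw hr0.le hγ0 hγk ht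
  have hHt := (hsol j).norm_sq_magnetic_le_modeConstant hξ hρ hA (by linarith) hγ0
    (by linarith) ht
  have hws : 0 ≤ w ^ s := rpow_nonneg (by linarith) s
  constructor
  · refine (mul_le_mul_of_nonneg_left hVt hws).trans_eq ?_
    rw [← hwm]; ring
  · refine (mul_le_mul_of_nonneg_left hHt hws).trans_eq ?_
    rw [← hwm]; ring

theorem stmt_11_general (n : ℕ) (bt : Fin n → ℝ) (c r : ℝ) (hc : 0 < c) (hr : (n : ℝ) - 1 < r)
    (hdio : ∀ j : Fin n → ℤ, j ≠ 0 → c / jnorm n j ^ r ≤ |∑ i, bt i * (j i : ℝ)|)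
    (m : ℕ)
    (V H : ℝ → (Fin n → ℤ) → EuclideanSpace ℂ (Fin n))
    (hV : ∀ (t : ℝ) (j : Fin n → ℤ), HasDerivAt (fun τ => V τ j)
      (-(V t j) + (Complex.I * ∑ i, (bt i : ℂ) * (j i : ℂ)) • H t j) t)
    (hH : ∀ (t : ℝ) (j : Fin n → ℤ), HasDerivAt (fun τ => H τ j)
      ((Complex.I * ∑ i, (bt i : ℂ) * (j i : ℂ)) • V t j) t)
    (hmeanV : V 0 0 = 0) (hmeanH : H 0 0 = 0)
    (hdata : Summable (fun j : Fin n → ℤ =>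
      (1 + jnorm n j ^ 2) ^ (m : ℝ) * (‖V 0 j‖ ^ 2 + ‖H 0 j‖ ^ 2))) :
    ∃ C > 0, ∀ t : ℝ, 0 ≤ t → ∀ s : ℝ, 0 ≤ s →
      ((s ≤ (m : ℝ) - 1 →
        Real.sqrt (∑' j : Fin n → ℤ, (1 + jnorm n j ^ 2) ^ s * ‖V t j‖ ^ 2)
          ≤ C * (1 + t) ^ (-(1 / 2 : ℝ) - ((m : ℝ) - s) / (2 * r)) *
            Real.sqrt (∑' j : Fin n → ℤ,
              (1 + jnorm n j ^ 2) ^ (m : ℝ) * (‖V 0 j‖ ^ 2 + ‖H 0 j‖ ^ 2))) ∧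
       (s ≤ (m : ℝ) →
        Real.sqrt (∑' j : Fin n → ℤ, (1 + jnorm n j ^ 2) ^ s * ‖H t j‖ ^ 2)
          ≤ C * (1 + t) ^ (-(((m : ℝ) - s) / (2 * r))) *
            Real.sqrt (∑' j : Fin n → ℤ,
              (1 + jnorm n j ^ 2) ^ (m : ℝ) * (‖V 0 j‖ ^ 2 + ‖H 0 j‖ ^ 2)))) := by
  have hsol : ∀ j, IsModeSolution (∑ i, bt i * (j i : ℝ)) (V · j) (H · j) := fun j =>
    ⟨fun t => by push_cast; exact hV t j, fun t => by push_cast; exact hH t j⟩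
  set K := modeConstant (1 + c⁻¹ ^ 2) (⌈(m : ℝ) / r⌉₊ + 1)
  have hK : 0 < K := by unfold K modeConstant; positivity
  refine ⟨√K, sqrt_pos.mpr hK, fun t ht s hs => ⟨fun hsm => ?_, fun hsm => ?_⟩⟩
  · have h := sqrt_tsum_le_of_le_mul (by positivity) (fun j => by positivity)
      (fun j => (weighted_norm_sq_le hc hr hdio hsol hmeanV hmeanH hs (by linarith) ht j).1) hdata
    rwa [sqrt_mul_rpow hK.le (by linarith),
      show -(1 + (m - s) / r) / 2 = -(1 / 2 : ℝ) - (m - s) / (2 * r) by ring] at h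
  · have h := sqrt_tsum_le_of_le_mul (by positivity) (fun j => by positivity)
      (fun j => (weighted_norm_sq_le hc hr hdio hsol hmeanV hmeanH hs hsm ht j).2) hdata
    rwa [sqrt_mul_rpow hK.le (by linarith),
      show -((m - s) / r) / 2 = -((m - s) / (2 * r)) by ring] at h

/-- Linear decay theorem (Theorem 1.1), stated on the Fourier side.  Let `b̃ ∈ ℝⁿ`
satisfy the Diophantine condition `|b̃·j| ≥ c/|j|^r` (`c > 0`, `r > n−1`) and let
`(V, H)` solve `∂_t V + V = b̃·∇H`, `∂_t H = b̃·∇V` on `Tⁿ` with divergence-free,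
mean-zero initial data `(V₀, H₀) ∈ H^m`, `m ≥ 1`.  Then for `0 ≤ s ≤ m − 1`,
`‖V(t)‖_{H^s} ≤ C (1+t)^{−1/2−(m−s)/(2r)} ‖(V₀,H₀)‖_{H^m}`, and for `0 ≤ s ≤ m`,
`‖H(t)‖_{H^s} ≤ C (1+t)^{−(m−s)/(2r)} ‖(V₀,H₀)‖_{H^m}`. -/
theorem stmt_11 (n : ℕ) (bt : Fin n → ℝ) (c r : ℝ) (hc : 0 < c) (hr : (n : ℝ) - 1 < r)
    (hdio : ∀ j : Fin n → ℤ, j ≠ 0 → c / jnorm n j ^ r ≤ |∑ i, bt i * (j i : ℝ)|)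
    (m : ℕ) (hm : 1 ≤ m)
    (V H : ℝ → (Fin n → ℤ) → EuclideanSpace ℂ (Fin n))
    (hV : ∀ (t : ℝ) (j : Fin n → ℤ), HasDerivAt (fun τ => V τ j)
      (-(V t j) + (Complex.I * ∑ i, (bt i : ℂ) * (j i : ℂ)) • H t j) t)
    (hH : ∀ (t : ℝ) (j : Fin n → ℤ), HasDerivAt (fun τ => H τ j)
      ((Complex.I * ∑ i, (bt i : ℂ) * (j i : ℂ)) • V t j) t)
    (hdivV : ∀ (t : ℝ) (j : Fin n → ℤ), ∑ i, (j i : ℂ) * V t j i = 0)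
    (hdivH : ∀ (t : ℝ) (j : Fin n → ℤ), ∑ i, (j i : ℂ) * H t j i = 0)
    (hmeanV : V 0 0 = 0) (hmeanH : H 0 0 = 0)
    (hdata : Summable (fun j : Fin n → ℤ =>
      (1 + jnorm n j ^ 2) ^ (m : ℝ) * (‖V 0 j‖ ^ 2 + ‖H 0 j‖ ^ 2))) :
    ∃ C > 0, ∀ t : ℝ, 0 ≤ t → ∀ s : ℝ, 0 ≤ s →
      ((s ≤ (m : ℝ) - 1 →
        Real.sqrt (∑' j : Fin n → ℤ, (1 + jnorm n j ^ 2) ^ s * ‖V t j‖ ^ 2)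
          ≤ C * (1 + t) ^ (-(1 / 2 : ℝ) - ((m : ℝ) - s) / (2 * r)) *
            Real.sqrt (∑' j : Fin n → ℤ,
              (1 + jnorm n j ^ 2) ^ (m : ℝ) * (‖V 0 j‖ ^ 2 + ‖H 0 j‖ ^ 2))) ∧
       (s ≤ (m : ℝ) →
        Real.sqrt (∑' j : Fin n → ℤ, (1 + jnorm n j ^ 2) ^ s * ‖H t j‖ ^ 2)
          ≤ C * (1 + t) ^ (-(((m : ℝ) - s) / (2 * r))) *
            Real.sqrt (∑' j : Fin n → ℤ,
              (1 + jnorm n j ^ 2) ^ (m : ℝ) * (‖V 0 j‖ ^ 2 + ‖H 0 j‖ ^ 2)))) :=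
  stmt_11_general n bt c r hc hr hdio m V H hV hH hmeanV hmeanH hdata
end

section
/- Let f, g be functions on T^n with absolutely summable Fourier coefficients and mean-zero f̂(0) = ĝ(0) = 0, and suppose m > 2 + n/2 with f, g ∈ H^m. Then Σ_{j ∈ Z^n \ {0}} |j|² |(f̂ * ĝ)(j)| ≤ C ‖f‖_{H^m} Σ_{j ∈ Z^n \ {0}} |j| |ĝ(j)| + C ‖g‖_{H^m} Σ_{j ∈ Z^n \ {0}} |j| |f̂(j)|. -/
open scoped ENNReal

lemma ENNReal.tsum_tsum_mul_sub {α : Type*} [AddGroup α] (A B : α → ℝ≥0∞) :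
    ∑' j, ∑' k, A (j - k) * B k = (∑' l, A l) * ∑' k, B k := by
  rw [ENNReal.tsum_comm, ← ENNReal.tsum_mul_left]
  refine tsum_congr fun k => ?_
  rw [ENNReal.tsum_mul_right]
  exact congrArg (· * B k) ((Equiv.subRight k).tsum_eq A)

lemma ENNReal.ofReal_two_mul_mul {p : ℝ} (hp : 0 ≤ p) (q : ℝ) :
    ENNReal.ofReal (2 * p * q) = 2 * ENNReal.ofReal p * ENNReal.ofReal q := by
  rw [ENNReal.ofReal_mul (by positivity), ENNReal.ofReal_mul zero_le_two, ENNReal.ofReal_ofNat]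

lemma add_sq_le_of_one_le {a b : ℝ} (ha : 1 ≤ a) (hb : 1 ≤ b) :
    (a + b) ^ 2 ≤ 2 * a ^ 2 * b + 2 * a * b ^ 2 := by
  nlinarith [mul_le_mul ha hb zero_le_one (by linarith),
    mul_nonneg (sub_nonneg.2 ha) (sub_nonneg.2 hb),
    mul_nonneg (mul_nonneg (sub_nonneg.2 ha) (sub_nonneg.2 hb)) (by linarith : (0 : ℝ) ≤ a + b)]

lemma summable_and_tsum_mul_le_sqrt_mul_sqrt {ι : Type*} {w a b : ι → ℝ} (hw : ∀ i, 0 < w i)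
    (ha : ∀ i, 0 ≤ a i) (hb : ∀ i, 0 ≤ b i) (hsa : Summable fun i => a i ^ 2 / w i)
    (hsb : Summable fun i => w i * b i ^ 2) :
    (Summable fun i => a i * b i) ∧
      ∑' i, a i * b i ≤ √(∑' i, a i ^ 2 / w i) * √(∑' i, w i * b i ^ 2) := by
  have hsplit : ∀ i, a i * b i = a i / √(w i) * (√(w i) * b i) := fun i => by
    field_simp [(Real.sqrt_pos.2 (hw i)).ne']
  have hsq_a : ∀ i, (a i / √(w i)) ^ (2 : ℝ) = a i ^ 2 / w i := fun i => by
    rw [Real.rpow_two, div_pow, Real.sq_sqrt (hw i).le]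
  have hsq_b : ∀ i, (√(w i) * b i) ^ (2 : ℝ) = w i * b i ^ 2 := fun i => by
    rw [Real.rpow_two, mul_pow, Real.sq_sqrt (hw i).le]
  have H := Real.summable_and_inner_le_Lp_mul_Lq_tsum_of_nonneg Real.HolderConjugate.two_two
    (fun i => div_nonneg (ha i) (Real.sqrt_nonneg _))
    (fun i => mul_nonneg (Real.sqrt_nonneg _) (hb i))
    (hsa.congr fun i => (hsq_a i).symm) (hsb.congr fun i => (hsq_b i).symm)
  simpa only [hsq_a, hsq_b, ← hsplit, ← Real.sqrt_eq_rpow] using H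

-- `ℤⁿ` as the `ℤ`-span of the standard basis of `EuclideanSpace ℝ (Fin n)`, so that the
-- `p`-series bounds for lattices (`ZLattice.summable_norm_rpow`) apply to `jnorm`.
noncomputable def intLatticeEquiv (n : ℕ) :
    (Fin n → ℤ) ≃ₗ[ℤ]
      Submodule.span ℤ (Set.range (EuclideanSpace.basisFun (Fin n) ℝ).toBasis) :=
  ((EuclideanSpace.basisFun (Fin n) ℝ).toBasis.restrictScalars ℤ).equivFun.symm

lemma coe_intLatticeEquiv (n : ℕ) (l : Fin n → ℤ) :
    (intLatticeEquiv n l : EuclideanSpace ℝ (Fin n)) = WithLp.toLp 2 (fun i => (l i : ℝ)) := by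
  ext i
  simp only [intLatticeEquiv, Module.Basis.equivFun_symm_apply, Submodule.coe_sum,
    Submodule.coe_smul_of_tower, Module.Basis.restrictScalars_apply]
  simp [Pi.single_apply]

lemma jnorm_eq_norm (n : ℕ) (l : Fin n → ℤ) :
    jnorm n l = ‖(intLatticeEquiv n l : EuclideanSpace ℝ (Fin n))‖ := by
  rw [coe_intLatticeEquiv, EuclideanSpace.norm_eq]
  simp [jnorm]

lemma jnorm_nonneg (n : ℕ) (j : Fin n → ℤ) : 0 ≤ jnorm n j := Real.sqrt_nonneg _

lemma jnorm_zero (n : ℕ) : jnorm n 0 = 0 := by simp [jnorm]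

lemma jnorm_add_le (n : ℕ) (l k : Fin n → ℤ) : jnorm n (l + k) ≤ jnorm n l + jnorm n k := by
  simpa only [jnorm_eq_norm, map_add, Submodule.coe_add] using norm_add_le _ _

lemma one_le_jnorm (n : ℕ) {j : Fin n → ℤ} (h : j ≠ 0) : 1 ≤ jnorm n j := by
  obtain ⟨i, hi⟩ := Function.ne_iff.mp h
  have hi : (1 : ℝ) ≤ (j i : ℝ) ^ 2 := by
    rw [← sq_abs, ← Int.cast_abs]
    exact one_le_pow₀ (by exact_mod_cast Int.one_le_abs hi)
  rw [jnorm, Real.one_le_sqrt]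
  exact hi.trans (Finset.single_le_sum (f := fun i => (j i : ℝ) ^ 2)
    (fun _ _ => sq_nonneg _) (Finset.mem_univ i))

lemma summable_one_add_jnorm_sq_rpow (n : ℕ) {s : ℝ} (hs : (n : ℝ) / 2 < s) :
    Summable (fun l : Fin n → ℤ => (1 + jnorm n l ^ 2) ^ (-s)) := by
  have hrank : Module.finrank ℤ (Submodule.span ℤ
      (Set.range (EuclideanSpace.basisFun (Fin n) ℝ).toBasis)) = n := by
    rw [ZLattice.rank ℝ]; simp
  have hlattice : Summable (fun l : Fin n → ℤ => jnorm n l ^ (-(2 * s))) :=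
    ((ZLattice.summable_norm_rpow _ (-(2 * s)) (by rw [hrank]; linarith)).comp_injective
      (intLatticeEquiv n).injective).congr fun l => by rw [jnorm_eq_norm]; rfl
  refine hlattice.of_norm_bounded_eventually ?_
  filter_upwards [(Set.finite_singleton (0 : Fin n → ℤ)).compl_mem_cofinite] with l hl
  have hpos : 0 < jnorm n l := one_pos.trans_le (one_le_jnorm n hl)
  rw [Real.norm_of_nonneg (by positivity), neg_mul_eq_mul_neg, Real.rpow_mul hpos.le,
    Real.rpow_two]
  exact Real.rpow_le_rpow_of_nonpos (by positivity) (by linarith)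
    (by linarith [n.cast_nonneg (α := ℝ)])

lemma jnorm_add_sq_mul_le (n : ℕ) {l k : Fin n → ℤ} {x y : ℝ} (hx : 0 ≤ x) (hy : 0 ≤ y)
    (hlx : l = 0 → x = 0) (hky : k = 0 → y = 0) :
    jnorm n (l + k) ^ 2 * (x * y)
      ≤ 2 * (jnorm n l ^ 2 * x) * (jnorm n k * y)
        + 2 * (jnorm n l * x) * (jnorm n k ^ 2 * y) := by
  rcases eq_or_ne l 0 with rfl | hl
  · simp [hlx rfl]
  rcases eq_or_ne k 0 with rfl | hk
  · simp [hky rfl]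
  have hsq : jnorm n (l + k) ^ 2 ≤ (jnorm n l + jnorm n k) ^ 2 :=
    pow_le_pow_left₀ (jnorm_nonneg n _) (jnorm_add_le n l k) 2
  have hweight := hsq.trans (add_sq_le_of_one_le (one_le_jnorm n hl) (one_le_jnorm n hk))
  calc jnorm n (l + k) ^ 2 * (x * y)
      ≤ (2 * jnorm n l ^ 2 * jnorm n k + 2 * jnorm n l * jnorm n k ^ 2) * (x * y) := by
        gcongr
    _ = _ := by ring

lemma summable_and_tsum_jnorm_sq_mul_le (n : ℕ) {m : ℝ}
    (hK : Summable fun l : Fin n → ℤ => (1 + jnorm n l ^ 2) ^ (2 - m))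
    {a : (Fin n → ℤ) → ℝ} (ha : ∀ l, 0 ≤ a l)
    (hH : Summable fun l => (1 + jnorm n l ^ 2) ^ m * a l ^ 2) :
    (Summable fun l => jnorm n l ^ 2 * a l) ∧
      ∑' l, jnorm n l ^ 2 * a l
        ≤ √(∑' l, (1 + jnorm n l ^ 2) ^ (2 - m)) *
            √(∑' l, (1 + jnorm n l ^ 2) ^ m * a l ^ 2) := by
  have hw : ∀ l : Fin n → ℤ, 0 < 1 + jnorm n l ^ 2 := fun l => by positivity
  have hratio : ∀ l,
      (jnorm n l ^ 2) ^ 2 / (1 + jnorm n l ^ 2) ^ m ≤ (1 + jnorm n l ^ 2) ^ (2 - m) := fun l => by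
    rw [Real.rpow_sub (hw l), Real.rpow_two]
    gcongr
    linarith
  have hsa : Summable fun l => (jnorm n l ^ 2) ^ 2 / (1 + jnorm n l ^ 2) ^ m :=
    hK.of_nonneg_of_le (fun l => by positivity) hratio
  obtain ⟨hsum, hle⟩ := summable_and_tsum_mul_le_sqrt_mul_sqrt
    (fun l => Real.rpow_pos_of_pos (hw l) m) (fun l => sq_nonneg (jnorm n l)) ha hsa hH
  exact ⟨hsum, hle.trans (mul_le_mul_of_nonneg_right
    (Real.sqrt_le_sqrt (hsa.tsum_le_tsum hratio hK)) (Real.sqrt_nonneg _))⟩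

lemma tsum_ne_zero_jnorm_mul (n : ℕ) (a : (Fin n → ℤ) → ℝ) :
    ∑' j : {j : Fin n → ℤ // j ≠ 0}, jnorm n j.1 * a j.1 = ∑' j, jnorm n j * a j :=
  tsum_subtype_eq_of_support_subset (f := fun j => jnorm n j * a j) fun j hj (h : j = 0) =>
    hj (by simp [h, jnorm_zero])

section Convolution

variable {n : ℕ} {f g : (Fin n → ℤ) → ℂ}

lemma ofReal_jnorm_sq_mul_norm_conv_le (hf : f 0 = 0) (hg : g 0 = 0) (j : Fin n → ℤ) :
    ENNReal.ofReal (jnorm n j ^ 2 * ‖∑' k, f (j - k) * g k‖)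
      ≤ ∑' k, (2 * ENNReal.ofReal (jnorm n (j - k) ^ 2 * ‖f (j - k)‖)
                * ENNReal.ofReal (jnorm n k * ‖g k‖)
              + 2 * ENNReal.ofReal (jnorm n (j - k) * ‖f (j - k)‖)
                * ENNReal.ofReal (jnorm n k ^ 2 * ‖g k‖)) := by
  have hj2 : 0 ≤ jnorm n j ^ 2 := sq_nonneg _
  calc ENNReal.ofReal (jnorm n j ^ 2 * ‖∑' k, f (j - k) * g k‖)
      = ENNReal.ofReal (jnorm n j ^ 2) * ‖∑' k, f (j - k) * g k‖ₑ := by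
        rw [ENNReal.ofReal_mul hj2, ofReal_norm]
    _ ≤ ENNReal.ofReal (jnorm n j ^ 2) * ∑' k, ‖f (j - k) * g k‖ₑ := by
        gcongr; exact enorm_tsum_le_tsum_enorm
    _ = ∑' k, ENNReal.ofReal (jnorm n (j - k + k) ^ 2 * (‖f (j - k)‖ * ‖g k‖)) := by
        rw [← ENNReal.tsum_mul_left]
        refine tsum_congr fun k => ?_
        rw [sub_add_cancel, ENNReal.ofReal_mul hj2, ← norm_mul, ofReal_norm]
    _ ≤ _ := by
        refine ENNReal.tsum_le_tsum fun k => ?_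
        have := jnorm_nonneg n (j - k)
        have := jnorm_nonneg n k
        refine (ENNReal.ofReal_le_ofReal (jnorm_add_sq_mul_le n (norm_nonneg _) (norm_nonneg _)
          (fun h => by rw [h, hf, norm_zero]) (fun h => by rw [h, hg, norm_zero]))).trans_eq ?_
        rw [ENNReal.ofReal_add (by positivity) (by positivity),
          ENNReal.ofReal_two_mul_mul (by positivity), ENNReal.ofReal_two_mul_mul (by positivity)]

lemma tsum_ofReal_jnorm_sq_mul_norm_conv_le (hf : f 0 = 0) (hg : g 0 = 0)
    (hf1 : Summable fun l => jnorm n l * ‖f l‖) (hg1 : Summable fun l => jnorm n l * ‖g l‖)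
    (hf2 : Summable fun l => jnorm n l ^ 2 * ‖f l‖)
    (hg2 : Summable fun l => jnorm n l ^ 2 * ‖g l‖) :
    ∑' j, ENNReal.ofReal (jnorm n j ^ 2 * ‖∑' k, f (j - k) * g k‖)
      ≤ ENNReal.ofReal (2 * (∑' l, jnorm n l ^ 2 * ‖f l‖) * (∑' l, jnorm n l * ‖g l‖)
          + 2 * (∑' l, jnorm n l ^ 2 * ‖g l‖) * (∑' l, jnorm n l * ‖f l‖)) := by
  have h1 : ∀ (φ : (Fin n → ℤ) → ℂ) l, 0 ≤ jnorm n l * ‖φ l‖ :=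
    fun φ l => mul_nonneg (jnorm_nonneg n l) (norm_nonneg _)
  have h2 : ∀ (φ : (Fin n → ℤ) → ℂ) l, 0 ≤ jnorm n l ^ 2 * ‖φ l‖ :=
    fun φ l => mul_nonneg (pow_nonneg (jnorm_nonneg n l) 2) (norm_nonneg _)
  calc ∑' j, ENNReal.ofReal (jnorm n j ^ 2 * ‖∑' k, f (j - k) * g k‖)
      ≤ ∑' j, ∑' k, (2 * ENNReal.ofReal (jnorm n (j - k) ^ 2 * ‖f (j - k)‖)
                * ENNReal.ofReal (jnorm n k * ‖g k‖)
              + 2 * ENNReal.ofReal (jnorm n (j - k) * ‖f (j - k)‖)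
                * ENNReal.ofReal (jnorm n k ^ 2 * ‖g k‖)) :=
        ENNReal.tsum_le_tsum (ofReal_jnorm_sq_mul_norm_conv_le hf hg)
    _ = 2 * (∑' l, ENNReal.ofReal (jnorm n l ^ 2 * ‖f l‖))
            * ∑' l, ENNReal.ofReal (jnorm n l * ‖g l‖)
        + 2 * (∑' l, ENNReal.ofReal (jnorm n l ^ 2 * ‖g l‖))
            * ∑' l, ENNReal.ofReal (jnorm n l * ‖f l‖) := by
        simp only [ENNReal.tsum_add, mul_assoc, ENNReal.tsum_mul_left]
        rw [ENNReal.tsum_tsum_mul_sub (fun l => ENNReal.ofReal (jnorm n l ^ 2 * ‖f l‖)),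
          ENNReal.tsum_tsum_mul_sub (fun l => ENNReal.ofReal (jnorm n l * ‖f l‖)),
          mul_comm (∑' l, ENNReal.ofReal (jnorm n l * ‖f l‖))]
    _ = _ := by
        have : 0 ≤ ∑' l, jnorm n l * ‖f l‖ := tsum_nonneg (h1 f)
        have : 0 ≤ ∑' l, jnorm n l * ‖g l‖ := tsum_nonneg (h1 g)
        have : 0 ≤ ∑' l, jnorm n l ^ 2 * ‖f l‖ := tsum_nonneg (h2 f)
        have : 0 ≤ ∑' l, jnorm n l ^ 2 * ‖g l‖ := tsum_nonneg (h2 g)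
        rw [← ENNReal.ofReal_tsum_of_nonneg (h2 f) hf2,
          ← ENNReal.ofReal_tsum_of_nonneg (h2 g) hg2,
          ← ENNReal.ofReal_tsum_of_nonneg (h1 f) hf1,
          ← ENNReal.ofReal_tsum_of_nonneg (h1 g) hg1,
          ENNReal.ofReal_add (by positivity) (by positivity),
          ENNReal.ofReal_two_mul_mul (by positivity), ENNReal.ofReal_two_mul_mul (by positivity)]

end Convolution

/-- Bilinear convolution estimate.  Let `f, g` on `Tⁿ` have absolutely summable,
mean-zero Fourier coefficients and lie in `H^m` with `m > 2 + n/2`.  Then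
`Σ_{j≠0} |j|² |(f̂ * ĝ)(j)| ≤ C ‖f‖_{H^m} Σ_{j≠0} |j||ĝ(j)| + C ‖g‖_{H^m} Σ_{j≠0} |j||f̂(j)|`,
where `(f̂ * ĝ)(j) = Σ_k f̂(j−k) ĝ(k)` and `‖f‖²_{H^m} = Σ_j (1+|j|²)^m |f̂(j)|²`. -/
theorem stmt_15 (n : ℕ) (m : ℝ) (hm : 2 + (n : ℝ) / 2 < m) :
    ∃ C > 0, ∀ fhat ghat : (Fin n → ℤ) → ℂ,
      fhat 0 = 0 → ghat 0 = 0 →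
      Summable (fun j : Fin n → ℤ => ‖fhat j‖) →
      Summable (fun j : Fin n → ℤ => ‖ghat j‖) →
      Summable (fun j : Fin n → ℤ => (1 + jnorm n j ^ 2) ^ m * ‖fhat j‖ ^ 2) →
      Summable (fun j : Fin n → ℤ => (1 + jnorm n j ^ 2) ^ m * ‖ghat j‖ ^ 2) →
      Summable (fun j : Fin n → ℤ => jnorm n j * ‖fhat j‖) →
      Summable (fun j : Fin n → ℤ => jnorm n j * ‖ghat j‖) →
      (∑' j : {j : Fin n → ℤ // j ≠ 0},
          ENNReal.ofReal (jnorm n j.1 ^ 2 * ‖∑' k : Fin n → ℤ, fhat (j.1 - k) * ghat k‖))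
        ≤ ENNReal.ofReal
            (C * Real.sqrt (∑' j : Fin n → ℤ, (1 + jnorm n j ^ 2) ^ m * ‖fhat j‖ ^ 2) *
                (∑' j : {j : Fin n → ℤ // j ≠ 0}, jnorm n j.1 * ‖ghat j.1‖)
              + C * Real.sqrt (∑' j : Fin n → ℤ, (1 + jnorm n j ^ 2) ^ m * ‖ghat j‖ ^ 2) *
                  ∑' j : {j : Fin n → ℤ // j ≠ 0}, jnorm n j.1 * ‖fhat j.1‖) := by
  have hK : Summable fun l : Fin n → ℤ => (1 + jnorm n l ^ 2) ^ (2 - m) := by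
    simpa using summable_one_add_jnorm_sq_rpow n (s := m - 2) (by linarith)
  have hK_pos : 0 < ∑' l : Fin n → ℤ, (1 + jnorm n l ^ 2) ^ (2 - m) :=
    hK.tsum_pos (fun l => by positivity) 0 (by positivity)
  refine ⟨2 * √(∑' l : Fin n → ℤ, (1 + jnorm n l ^ 2) ^ (2 - m)), by positivity, ?_⟩
  intro f g hf0 hg0 _ _ hfm hgm hf1 hg1
  obtain ⟨hf2, hf2_le⟩ :=
    summable_and_tsum_jnorm_sq_mul_le n hK (fun l => norm_nonneg (f l)) hfm
  obtain ⟨hg2, hg2_le⟩ :=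
    summable_and_tsum_jnorm_sq_mul_le n hK (fun l => norm_nonneg (g l)) hgm
  have hf1_nonneg : 0 ≤ ∑' l, jnorm n l * ‖f l‖ :=
    tsum_nonneg fun l => mul_nonneg (jnorm_nonneg n l) (norm_nonneg _)
  have hg1_nonneg : 0 ≤ ∑' l, jnorm n l * ‖g l‖ :=
    tsum_nonneg fun l => mul_nonneg (jnorm_nonneg n l) (norm_nonneg _)
  rw [tsum_ne_zero_jnorm_mul n fun j => ‖g j‖, tsum_ne_zero_jnorm_mul n fun j => ‖f j‖]
  refine (ENNReal.tsum_comp_le_tsum_of_injective Subtype.val_injective _).trans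
    ((tsum_ofReal_jnorm_sq_mul_norm_conv_le hf0 hg0 hf1 hg1 hf2 hg2).trans
      (ENNReal.ofReal_le_ofReal ?_))
  nlinarith [mul_le_mul_of_nonneg_right hf2_le hg1_nonneg,
    mul_le_mul_of_nonneg_right hg2_le hf1_nonneg]
end
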